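/- arXiv:1706.09802 — 4 statements merged into one kernel-verified Lean document; each statement's English description precedes it below -/
import Mathlib

section
/- Let A be a totally ordered commutative (not necessarily unital) domain, i.e., a commutative ring without zero divisors equipped with a total order making it an ordered ring, and let I be a proper order-convex ring ideal of A. Then for every x ∈ I, every a ∈ A, and every natural number n, the inequality n • |x * a| ≤ |a| holds. -/
/-- Let `A` be a totally ordered commutative (not necessarily unital) domain and
`I` a proper order-convex ring ideal of `A`. Then for every `x ∈ I`, `a ∈ A`
and `n : ℕ`, we have `n • |x * a| ≤ |a|`. -/
theorem stmt_3 {A : Type*} [NonUnitalCommRing A] [LinearOrder A]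
    [CovariantClass A A (· + ·) (· ≤ ·)]
    (hmul : ∀ a b : A, 0 ≤ a → 0 ≤ b → 0 ≤ a * b)
    (hdom : ∀ a b : A, a * b = 0 → a = 0 ∨ b = 0)
    (I : Set A)
    (hI0 : (0 : A) ∈ I)
    (hIsub : ∀ u v : A, u ∈ I → v ∈ I → u - v ∈ I)
    (hIabsorb : ∀ u a : A, u ∈ I → a * u ∈ I)
    (hIproper : I ≠ Set.univ)
    (hIconvex : ∀ u v w : A, u ∈ I → w ∈ I → u ≤ v → v ≤ w → v ∈ I) :
    ∀ x ∈ I, ∀ a : A, ∀ n : ℕ, n • |x * a| ≤ |a| := by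
  have habs_mul : ∀ s t : A, |s * t| = |s| * |t| := by
    intro s t
    rcases le_total 0 s with hs | hs <;> rcases le_total 0 t with ht | ht
    · rw [abs_of_nonneg hs, abs_of_nonneg ht, abs_of_nonneg (hmul _ _ hs ht)]
    · have h1 : 0 ≤ s * (-t) := hmul _ _ hs (neg_nonneg.2 ht)
      rw [mul_neg] at h1
      rw [abs_of_nonneg hs, abs_of_nonpos ht, abs_of_nonpos (neg_nonneg.1 h1), mul_neg]
    · have h1 : 0 ≤ (-s) * t := hmul _ _ (neg_nonneg.2 hs) ht
      rw [neg_mul] at h1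
      rw [abs_of_nonpos hs, abs_of_nonneg ht, abs_of_nonpos (neg_nonneg.1 h1), neg_mul]
    · have h1 : 0 ≤ (-s) * (-t) := hmul _ _ (neg_nonneg.2 hs) (neg_nonneg.2 ht)
      rw [neg_mul_neg] at h1
      rw [abs_of_nonpos hs, abs_of_nonpos ht, abs_of_nonneg h1, neg_mul_neg]
  intro x hx a n
  have hnegI : ∀ u : A, u ∈ I → -u ∈ I := by
    intro u hu
    have := hIsub 0 u hI0 hu
    simpa using this
  have haddI : ∀ u v : A, u ∈ I → v ∈ I → u + v ∈ I := by
    intro u v hu hv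
    have := hIsub u (-v) hu (hnegI v hv)
    simpa [sub_neg_eq_add] using this
  have habsI : |x| ∈ I := by
    rcases abs_choice x with h | h <;> rw [h]
    · exact hx
    · exact hnegI x hx
  set u := |x| with hu_def
  set c := |a| with hc_def
  have hu0 : 0 ≤ u := abs_nonneg x
  have hc0 : 0 ≤ c := abs_nonneg a
  have hnsmulI : ∀ m : ℕ, (m • u) ∈ I := by
    intro m
    induction m with
    | zero => simpa using hI0
    | succ k ih =>
      rw [succ_nsmul]
      exact haddI _ _ ih habsI
  have hsm0 : ∀ m : ℕ, m • (u * c) = (m • u) * c := by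
    intro m
    induction m with
    | zero => simp
    | succ k ih => rw [succ_nsmul, succ_nsmul, add_mul, ih]
  have hv : (n • u) ∈ I := hnsmulI n
  set v := n • u with hv_def
  have hsm : n • (u * c) = v * c := hsm0 n
  rw [habs_mul, hsm]
  by_contra hcon
  push_neg at hcon
  have hc_pos : 0 < c := by
    rcases hc0.lt_or_eq with h | h
    · exact h
    · rw [← h, mul_zero] at hcon
      exact absurd hcon (lt_irrefl 0)
  have key : ∀ t : A, 0 < t → t ≤ v * t := by
    intro t ht
    by_contra hlt
    push_neg at hlt
    have h1 : 0 ≤ (t - v * t) * c := hmul _ _ (sub_nonneg.2 hlt.le) hc0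
    rw [sub_mul] at h1
    have h2 : v * t * c ≤ t * c := sub_nonneg.1 h1
    have h3 : 0 ≤ t * (v * c - c) := hmul _ _ ht.le (sub_nonneg.2 hcon.le)
    have h4 : t * (v * c - c) ≠ 0 := by
      intro h0
      rcases hdom _ _ h0 with h' | h'
      · exact ht.ne' h'
      · exact (sub_ne_zero.2 hcon.ne') h'
    have h5 : 0 < t * (v * c) - t * c := by
      rw [mul_sub] at h3 h4
      exact lt_of_le_of_ne h3 (Ne.symm h4)
    have h6 : t * c < t * (v * c) := sub_pos.1 h5
    rw [mul_left_comm, ← mul_assoc] at h6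
    exact absurd (h6.trans_le h2) (lt_irrefl _)
  have hposI : ∀ t : A, 0 < t → t ∈ I := by
    intro t ht
    have hvt : v * t ∈ I := by rw [mul_comm]; exact hIabsorb v t hv
    exact hIconvex 0 t (v * t) hI0 hvt ht.le (key t ht)
  apply hIproper
  ext w
  simp only [Set.mem_univ, iff_true]
  rcases lt_trichotomy w 0 with hw | hw | hw
  · have := hposI (-w) (neg_pos.2 hw)
    simpa using hnegI _ this
  · exact hw ▸ hI0
  · exact hposI w hw
end

section
/- Every distributive lattice with zero that is isomorphic to the lattice of finitely generated ℓ-ideals of an abelian lattice-ordered group is completely normal: for all elements a, b there exist x, y with x ≤ a, y ≤ b, a ⊔ b = a ⊔ y = x ⊔ b, and x ⊓ y = 0. -/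
/-- An ℓ-ideal of an abelian lattice-ordered group: a subgroup which is an
order-convex sublattice. -/
def IsLIdeal {G : Type*} [Lattice G] [AddCommGroup G] (I : Set G) : Prop :=
  (0 : G) ∈ I ∧ (∀ x y : G, x ∈ I → y ∈ I → x - y ∈ I) ∧
  (∀ x y : G, x ∈ I → y ∈ I → x ⊔ y ∈ I) ∧
  (∀ x y : G, x ∈ I → y ∈ I → x ⊓ y ∈ I) ∧
  (∀ x y z : G, x ∈ I → z ∈ I → x ≤ y → y ≤ z → y ∈ I)

/-- The ℓ-ideal of `G` generated by an element `x`. -/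
def lIdealGen {G : Type*} [Lattice G] [AddCommGroup G] (x : G) : Set G :=
  ⋂₀ {I : Set G | IsLIdeal I ∧ x ∈ I}

section Aux

variable {G : Type*} [Lattice G] [AddCommGroup G]
  [CovariantClass G G (· + ·) (· ≤ ·)]

private lemma lgen_isLIdeal_genSet (x : G) :
    IsLIdeal {y : G | ∃ n : ℕ, |y| ≤ n • |x|} := by
  refine ⟨⟨0, by simp⟩, ?_, ?_, ?_, ?_⟩
  · rintro y z ⟨m, hm⟩ ⟨n, hn⟩
    refine ⟨m + n, ?_⟩
    have h1 : |y - z| ≤ |y| + |z| := by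
      rw [sub_eq_add_neg]
      exact (abs_add_le y (-z)).trans (by rw [abs_neg])
    exact h1.trans <| by rw [add_smul]; exact add_le_add hm hn
  · rintro y z ⟨m, hm⟩ ⟨n, hn⟩
    refine ⟨m + n, ?_⟩
    have h1 : |y ⊔ z| ≤ |y| + |z| := by
      refine sup_le ?_ ?_
      · exact sup_le ((le_abs_self y).trans (le_add_of_nonneg_right (abs_nonneg z)))
          ((le_abs_self z).trans (le_add_of_nonneg_left (abs_nonneg y)))
      · rw [neg_sup]
        exact inf_le_left.trans ((neg_le_abs y).trans
          (le_add_of_nonneg_right (abs_nonneg z)))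
    exact h1.trans <| by rw [add_smul]; exact add_le_add hm hn
  · rintro y z ⟨m, hm⟩ ⟨n, hn⟩
    refine ⟨m + n, ?_⟩
    have h1 : |y ⊓ z| ≤ |y| + |z| := by
      refine sup_le ?_ ?_
      · exact inf_le_left.trans ((le_abs_self y).trans
          (le_add_of_nonneg_right (abs_nonneg z)))
      · rw [neg_inf]
        exact sup_le ((neg_le_abs y).trans (le_add_of_nonneg_right (abs_nonneg z)))
          ((neg_le_abs z).trans (le_add_of_nonneg_left (abs_nonneg y)))
    exact h1.trans <| by rw [add_smul]; exact add_le_add hm hn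
  · rintro a y c ⟨m, hm⟩ ⟨n, hn⟩ h1 h2
    refine ⟨m + n, ?_⟩
    have : |y| ≤ |a| + |c| := by
      refine sup_le (h2.trans ((le_abs_self c).trans
        (le_add_of_nonneg_left (abs_nonneg a)))) ?_
      have hna : -y ≤ -a := neg_le_neg_iff.2 h1
      exact hna.trans ((neg_le_abs a).trans (le_add_of_nonneg_right (abs_nonneg c)))
    exact this.trans <| by rw [add_smul]; exact add_le_add hm hn

private lemma lgen_mem_iff {x y : G} :
    y ∈ lIdealGen x ↔ ∃ n : ℕ, |y| ≤ n • |x| := by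
  constructor
  · intro hy
    exact hy _ ⟨lgen_isLIdeal_genSet x, ⟨1, by simp⟩⟩
  · rintro ⟨n, hn⟩ I ⟨hI, hxI⟩
    obtain ⟨h0, hsub, hsup, hinf, hconv⟩ := hI
    have hneg : ∀ z : G, z ∈ I → -z ∈ I := fun z hz => by
      simpa using hsub 0 z h0 hz
    have habs : |x| ∈ I := hsup x (-x) hxI (hneg x hxI)
    have hadd : ∀ z w : G, z ∈ I → w ∈ I → z + w ∈ I := fun z w hz hw => by
      simpa [sub_neg_eq_add] using hsub z (-w) hz (hneg w hw)
    have hsmul : ∀ m : ℕ, (m • |x|) ∈ I := by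
      intro m
      induction m with
      | zero => simpa using h0
      | succ k ih => rw [succ_nsmul]; exact hadd _ _ ih habs
    refine hconv (-(n • |x|)) y (n • |x|) (hneg _ (hsmul n)) (hsmul n) ?_
      ((le_abs_self y).trans hn)
    rw [neg_le]
    exact (neg_le_abs y).trans hn

private lemma lgen_self_mem (x : G) : x ∈ lIdealGen x :=
  lgen_mem_iff.2 ⟨1, by simp⟩

private lemma lgen_subset {x c : G} (h : x ∈ lIdealGen c) :
    lIdealGen x ⊆ lIdealGen c := by
  intro y hy
  obtain ⟨n, hn⟩ := lgen_mem_iff.1 hy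
  obtain ⟨m, hm⟩ := lgen_mem_iff.1 h
  refine lgen_mem_iff.2 ⟨n * m, hn.trans ?_⟩
  rw [mul_smul]
  exact nsmul_le_nsmul_right hm n

private lemma lgen_zero : lIdealGen (0 : G) = {0} := by
  ext y
  simp only [Set.mem_singleton_iff, lgen_mem_iff]
  constructor
  · rintro ⟨n, hn⟩
    have h0 : |y| ≤ 0 := by simpa using hn
    exact le_antisymm ((le_abs_self y).trans h0)
      (neg_nonpos.1 ((neg_le_abs y).trans h0))
  · rintro rfl; exact ⟨0, by simp⟩

end Aux

/-- Every distributive lattice with zero isomorphic (as an ordered set) to the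
poset of finitely generated (= principal) ℓ-ideals of an abelian ℓ-group is
completely normal. -/
theorem stmt_8 {G : Type*} [Lattice G] [AddCommGroup G]
    [CovariantClass G G (· + ·) (· ≤ ·)]
    {D : Type*} [DistribLattice D] [OrderBot D]
    (e : D ≃o {I : Set G // ∃ x : G, I = lIdealGen x}) :
    ∀ a b : D, ∃ x y : D, x ≤ a ∧ y ≤ b ∧
      a ⊔ b = a ⊔ y ∧ a ⊔ b = x ⊔ b ∧ x ⊓ y = ⊥ := by
  classical
  set P := {I : Set G // ∃ x : G, I = lIdealGen x} with hP
  -- basic: order on P is set inclusion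
  have hle : ∀ p q : P, p ≤ q ↔ (p : Set G) ⊆ (q : Set G) := fun p q => Iff.rfl
  -- the value of e at a sup
  have hsupval : ∀ (d₁ d₂ : D) (g₁ g₂ : G),
      ((e d₁ : P) : Set G) = lIdealGen g₁ → ((e d₂ : P) : Set G) = lIdealGen g₂ →
      ((e (d₁ ⊔ d₂) : P) : Set G) = lIdealGen (|g₁| + |g₂|) := by
    intro d₁ d₂ g₁ g₂ h₁ h₂
    set J : P := ⟨lIdealGen (|g₁| + |g₂|), ⟨_, rfl⟩⟩ with hJ
    have habs : |(|g₁| + |g₂|)| = |g₁| + |g₂| :=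
      abs_of_nonneg (add_nonneg (abs_nonneg g₁) (abs_nonneg g₂))
    have hg₁J : g₁ ∈ lIdealGen (|g₁| + |g₂|) :=
      lgen_mem_iff.2 ⟨1, by rw [one_smul, habs]; exact
        le_add_of_nonneg_right (abs_nonneg g₂)⟩
    have hg₂J : g₂ ∈ lIdealGen (|g₁| + |g₂|) :=
      lgen_mem_iff.2 ⟨1, by rw [one_smul, habs]; exact
        le_add_of_nonneg_left (abs_nonneg g₁)⟩
    have h₁J : e d₁ ≤ J := by rw [hle, h₁]; exact lgen_subset hg₁J
    have h₂J : e d₂ ≤ J := by rw [hle, h₂]; exact lgen_subset hg₂J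
    have hub : e (d₁ ⊔ d₂) ≤ J := by
      have : d₁ ⊔ d₂ ≤ e.symm J := sup_le
        (by simpa using e.le_iff_le.1 (by simpa using h₁J : e d₁ ≤ e (e.symm J)))
        (by simpa using e.le_iff_le.1 (by simpa using h₂J : e d₂ ≤ e (e.symm J)))
      simpa using e.le_iff_le.2 this
    obtain ⟨c, hc⟩ := (e (d₁ ⊔ d₂) : P).2
    have hcg₁ : g₁ ∈ lIdealGen c := by
      have := (hle _ _).1 (e.le_iff_le.2 (le_sup_left : d₁ ≤ d₁ ⊔ d₂))
      rw [h₁, hc] at this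
      exact this (lgen_self_mem g₁)
    have hcg₂ : g₂ ∈ lIdealGen c := by
      have := (hle _ _).1 (e.le_iff_le.2 (le_sup_right : d₂ ≤ d₁ ⊔ d₂))
      rw [h₂, hc] at this
      exact this (lgen_self_mem g₂)
    obtain ⟨m, hm⟩ := lgen_mem_iff.1 hcg₁
    obtain ⟨n, hn⟩ := lgen_mem_iff.1 hcg₂
    have hsum : (|g₁| + |g₂|) ∈ lIdealGen c := lgen_mem_iff.2 ⟨m + n, by
      rw [habs, add_smul]; exact add_le_add hm hn⟩
    have hlb : (J : Set G) ⊆ ((e (d₁ ⊔ d₂) : P) : Set G) := by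
      rw [hc]; exact lgen_subset hsum
    exact le_antisymm ((hle _ _).1 hub) hlb
  -- the value of e at bot
  have hbotval : ((e ⊥ : P) : Set G) = lIdealGen (0 : G) := by
    set Z : P := ⟨lIdealGen (0 : G), ⟨_, rfl⟩⟩ with hZ
    have h1 : e ⊥ ≤ Z := by
      have : (⊥ : D) ≤ e.symm Z := bot_le
      simpa using e.le_iff_le.2 this
    obtain ⟨c, hc⟩ := (e ⊥ : P).2
    have h2 : (Z : Set G) ⊆ ((e ⊥ : P) : Set G) := by
      rw [hc]
      show lIdealGen (0 : G) ⊆ lIdealGen c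
      rw [lgen_zero]
      rintro y rfl
      exact lgen_mem_iff.2 ⟨0, by simp⟩
    exact le_antisymm ((hle _ _).1 h1) h2
  intro a b
  obtain ⟨ga, hga⟩ := (e a : P).2
  obtain ⟨gb, hgb⟩ := (e b : P).2
  set w : G := |ga| - |gb| with hw
  set u : G := w ⊔ 0 with hu
  set v : G := (-w) ⊔ 0 with hv
  have hu0 : (0 : G) ≤ u := le_sup_right
  have hv0 : (0 : G) ≤ v := le_sup_right
  refine ⟨e.symm ⟨lIdealGen u, ⟨_, rfl⟩⟩, e.symm ⟨lIdealGen v, ⟨_, rfl⟩⟩, ?_, ?_, ?_, ?_, ?_⟩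
  · -- x ≤ a
    have : u ∈ lIdealGen ga := lgen_mem_iff.2 ⟨1, by
      rw [one_smul, abs_of_nonneg hu0]
      exact sup_le (sub_le_self _ (abs_nonneg gb)) (abs_nonneg ga)⟩
    have h : (⟨lIdealGen u, ⟨u, rfl⟩⟩ : P) ≤ e a := by
      rw [hle, hga]; exact lgen_subset this
    simpa using e.symm.le_iff_le.2 h
  · -- y ≤ b
    have : v ∈ lIdealGen gb := lgen_mem_iff.2 ⟨1, by
      rw [one_smul, abs_of_nonneg hv0]
      refine sup_le ?_ (abs_nonneg gb)
      rw [hw, neg_sub]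
      exact sub_le_self _ (abs_nonneg ga)⟩
    have h : (⟨lIdealGen v, ⟨v, rfl⟩⟩ : P) ≤ e b := by
      rw [hle, hgb]; exact lgen_subset this
    simpa using e.symm.le_iff_le.2 h
  · -- a ⊔ b = a ⊔ y
    apply e.injective
    apply Subtype.ext
    have h1 := hsupval a b ga gb hga hgb
    have h2 := hsupval a (e.symm ⟨lIdealGen v, ⟨v, rfl⟩⟩) ga v hga (by rw [e.apply_symm_apply])
    rw [h1, h2, abs_of_nonneg hv0]
    have key : |ga| + v = |ga| ⊔ |gb| := by
      rw [hv, hw, neg_sub, add_sup, add_zero, add_sub_cancel, sup_comm]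
    rw [key]
    -- lIdealGen (|ga| + |gb|) = lIdealGen (|ga| ⊔ |gb|)
    have hmem1 : (|ga| + |gb|) ∈ lIdealGen (|ga| ⊔ |gb|) := lgen_mem_iff.2 ⟨2, by
      rw [abs_of_nonneg (add_nonneg (abs_nonneg ga) (abs_nonneg gb)),
        abs_of_nonneg (le_trans (abs_nonneg ga) le_sup_left), two_nsmul]
      exact add_le_add le_sup_left le_sup_right⟩
    have hmem2 : (|ga| ⊔ |gb|) ∈ lIdealGen (|ga| + |gb|) := lgen_mem_iff.2 ⟨1, by
      rw [one_smul, abs_of_nonneg (le_trans (abs_nonneg ga) le_sup_left),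
        abs_of_nonneg (add_nonneg (abs_nonneg ga) (abs_nonneg gb))]
      exact sup_le (le_add_of_nonneg_right (abs_nonneg gb))
        (le_add_of_nonneg_left (abs_nonneg ga))⟩
    exact Set.Subset.antisymm (lgen_subset hmem1) (lgen_subset hmem2)
  · -- a ⊔ b = x ⊔ b
    apply e.injective
    apply Subtype.ext
    have h1 := hsupval a b ga gb hga hgb
    have h2 := hsupval (e.symm ⟨lIdealGen u, ⟨u, rfl⟩⟩) b u gb (by rw [e.apply_symm_apply]) hgb
    rw [h1, h2, abs_of_nonneg hu0]
    have key : u + |gb| = |ga| ⊔ |gb| := by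
      rw [hu, hw, sup_add, zero_add, sub_add_cancel]
    rw [key]
    have hmem1 : (|ga| + |gb|) ∈ lIdealGen (|ga| ⊔ |gb|) := lgen_mem_iff.2 ⟨2, by
      rw [abs_of_nonneg (add_nonneg (abs_nonneg ga) (abs_nonneg gb)),
        abs_of_nonneg (le_trans (abs_nonneg ga) le_sup_left), two_nsmul]
      exact add_le_add le_sup_left le_sup_right⟩
    have hmem2 : (|ga| ⊔ |gb|) ∈ lIdealGen (|ga| + |gb|) := lgen_mem_iff.2 ⟨1, by
      rw [one_smul, abs_of_nonneg (le_trans (abs_nonneg ga) le_sup_left),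
        abs_of_nonneg (add_nonneg (abs_nonneg ga) (abs_nonneg gb))]
      exact sup_le (le_add_of_nonneg_right (abs_nonneg gb))
        (le_add_of_nonneg_left (abs_nonneg ga))⟩
    exact Set.Subset.antisymm (lgen_subset hmem1) (lgen_subset hmem2)
  · -- x ⊓ y = ⊥
    apply e.injective
    apply Subtype.ext
    set x : D := e.symm ⟨lIdealGen u, ⟨u, rfl⟩⟩
    set y : D := e.symm ⟨lIdealGen v, ⟨v, rfl⟩⟩
    have huv : u ⊓ v = 0 := by
      have := posPart_inf_negPart_eq_zero w
      simp only [posPart_def, negPart_def] at this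
      rw [hu, hv]; exact this
    -- e (x ⊓ y) ⊆ {0}
    obtain ⟨c, hc⟩ := (e (x ⊓ y) : P).2
    have hcx : lIdealGen c ⊆ lIdealGen u := by
      have := (hle _ _).1 (e.le_iff_le.2 (inf_le_left : x ⊓ y ≤ x))
      rw [hc, show e x = ⟨lIdealGen u, ⟨u, rfl⟩⟩ from e.apply_symm_apply _] at this
      exact this
    have hcy : lIdealGen c ⊆ lIdealGen v := by
      have := (hle _ _).1 (e.le_iff_le.2 (inf_le_right : x ⊓ y ≤ y))
      rw [hc, show e y = ⟨lIdealGen v, ⟨v, rfl⟩⟩ from e.apply_symm_apply _] at this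
      exact this
    have add_inf_le : ∀ p q r : G, 0 ≤ p → 0 ≤ q → 0 ≤ r →
        (p + q) ⊓ r ≤ p ⊓ r + q ⊓ r := by
      intro p q r hp hq hr
      have expand : p ⊓ r + q ⊓ r = ((p + q) ⊓ (r + q)) ⊓ ((p + r) ⊓ (r + r)) := by
        rw [add_inf, inf_add, inf_add]
      rw [expand]
      refine le_inf (le_inf inf_le_left ?_) (le_inf ?_ ?_)
      · exact inf_le_right.trans (le_add_of_nonneg_right hq)
      · exact inf_le_right.trans (le_add_of_nonneg_left hp)
      · exact inf_le_right.trans (le_add_of_nonneg_left hr)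
    have hkey : ∀ (k : ℕ) (p q : G), 0 ≤ p → 0 ≤ q → (k • p) ⊓ q ≤ k • (p ⊓ q) := by
      intro k p q hp hq
      induction k with
      | zero => simpa using inf_le_left
      | succ j ih =>
        rw [succ_nsmul, succ_nsmul]
        exact (add_inf_le (j • p) p q (nsmul_nonneg hp j) hp hq).trans
          (add_le_add_left ih _)
    have hc0 : c = 0 := by
      obtain ⟨m, hm⟩ := lgen_mem_iff.1 (hcx (lgen_self_mem c))
      obtain ⟨n, hn⟩ := lgen_mem_iff.1 (hcy (lgen_self_mem c))
      rw [abs_of_nonneg hu0] at hm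
      rw [abs_of_nonneg hv0] at hn
      have h1 : |c| ≤ (m • u) ⊓ (n • v) := le_inf hm hn
      have h2 : (m • u) ⊓ (n • v) ≤ m • (u ⊓ (n • v)) :=
        hkey m u (n • v) hu0 (nsmul_nonneg hv0 n)
      have h3 : u ⊓ (n • v) ≤ n • (u ⊓ v) := by
        rw [inf_comm]
        exact (hkey n v u hv0 hu0).trans (by rw [inf_comm])
      have h4 : |c| ≤ 0 := by
        refine (h1.trans (h2.trans ?_))
        calc m • (u ⊓ (n • v)) ≤ m • (n • (u ⊓ v)) := nsmul_le_nsmul_right h3 m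
          _ = 0 := by rw [huv]; simp
      exact le_antisymm ((le_abs_self c).trans h4)
        (neg_nonpos.1 ((neg_le_abs c).trans h4))
    rw [hbotval, hc, hc0]
end

section
/- Let B be a totally ordered commutative (not necessarily unital) domain and J a proper order-convex radical ring ideal of B. Then Q := { y ∈ J : ∃ n < ω, ∃ x ∈ P, |y|ⁿ ≤ x }, where P is a given prime ℓ-ideal of a subring A ⊆ B with P ⊆ J, is a prime ℓ-ideal of B satisfying Q ⊆ J and Q ∩ A = P. -/
/-- `pw a n = a^(n+1)`, positive powers in a not-necessarily-unital ring. -/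
def pw {B : Type*} [NonUnitalCommRing B] (a : B) : ℕ → B
  | 0 => a
  | n + 1 => pw a n * a

section aux

variable {B : Type*} [NonUnitalCommRing B] [LinearOrder B]
    [CovariantClass B B (· + ·) (· ≤ ·)]

lemma aux_mul_le (hmul : ∀ a b : B, 0 ≤ a → 0 ≤ b → 0 ≤ a * b)
    {a b c : B} (h : a ≤ b) (hc : 0 ≤ c) : a * c ≤ b * c := by
  have h1 := hmul (b - a) c (sub_nonneg.2 h) hc
  rw [sub_mul] at h1
  exact sub_nonneg.1 h1

lemma aux_mul_le_left (hmul : ∀ a b : B, 0 ≤ a → 0 ≤ b → 0 ≤ a * b)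
    {a b c : B} (h : a ≤ b) (hc : 0 ≤ c) : c * a ≤ c * b := by
  rw [mul_comm c a, mul_comm c b]; exact aux_mul_le hmul h hc

lemma aux_mul_mul (hmul : ∀ a b : B, 0 ≤ a → 0 ≤ b → 0 ≤ a * b)
    {a b c d : B} (ha : 0 ≤ a) (hab : a ≤ b) (hc : 0 ≤ c) (hcd : c ≤ d) :
    a * c ≤ b * d := by
  refine le_trans (aux_mul_le hmul hab hc) (aux_mul_le_left hmul hcd (le_trans ha hab))

lemma pw_nonneg (hmul : ∀ a b : B, 0 ≤ a → 0 ≤ b → 0 ≤ a * b)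
    {a : B} (ha : 0 ≤ a) : ∀ n, 0 ≤ pw a n
  | 0 => ha
  | n + 1 => hmul _ _ (pw_nonneg hmul ha n) ha

lemma pw_mono (hmul : ∀ a b : B, 0 ≤ a → 0 ≤ b → 0 ≤ a * b)
    {a b : B} (ha : 0 ≤ a) (hab : a ≤ b) : ∀ n, pw a n ≤ pw b n
  | 0 => hab
  | n + 1 => aux_mul_mul hmul (pw_nonneg hmul ha n) (pw_mono hmul ha hab n) ha hab

lemma pw_mul (a b : B) : ∀ n, pw (a * b) n = pw a n * pw b n
  | 0 => rfl
  | n + 1 => by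
    show pw (a*b) n * (a * b) = (pw a n * a) * (pw b n * b)
    rw [pw_mul a b n, mul_assoc, mul_assoc, mul_comm a (pw b n * b), mul_assoc,
      mul_comm b a]

lemma pw_add (a : B) (n : ℕ) : ∀ m, pw a n * pw a m = pw a (n + m + 1)
  | 0 => rfl
  | m + 1 => by
    show pw a n * (pw a m * a) = pw a (n + m + 1) * a
    rw [← mul_assoc, pw_add a n m]

end aux

/-- Let `B` be a totally ordered commutative (not necessarily unital) domain,
`A` a subring of `B`, `P` a prime ℓ-ideal of `A`, and `J` a proper order-convex
radical ideal of `B` with `P ⊆ J`.  Then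
`Q := {y ∈ J | ∃ n, ∃ x ∈ P, |y|ⁿ ≤ x}` is a prime ℓ-ideal of `B` with
`Q ⊆ J` and `Q ∩ A = P`. -/
theorem stmt_16 {B : Type*} [NonUnitalCommRing B] [LinearOrder B]
    [CovariantClass B B (· + ·) (· ≤ ·)]
    (hmul : ∀ a b : B, 0 ≤ a → 0 ≤ b → 0 ≤ a * b)
    (hdom : ∀ a b : B, a * b = 0 → a = 0 ∨ b = 0)
    -- `A` is a subring of `B`
    (A : Set B) (hA0 : (0 : B) ∈ A)
    (hAsub : ∀ x y : B, x ∈ A → y ∈ A → x - y ∈ A)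
    (hAmul : ∀ x y : B, x ∈ A → y ∈ A → x * y ∈ A)
    -- `P` is a prime ℓ-ideal of `A`
    (P : Set B) (hPA : P ⊆ A) (hP0 : (0 : B) ∈ P)
    (hPsub : ∀ x y : B, x ∈ P → y ∈ P → x - y ∈ P)
    (hPabsorb : ∀ a x : B, a ∈ A → x ∈ P → a * x ∈ P)
    (hPconvex : ∀ u v w : B, u ∈ P → w ∈ P → v ∈ A → u ≤ v → v ≤ w → v ∈ P)
    (hPproper : P ≠ A)
    (hPprime : ∀ x y : B, x ∈ A → y ∈ A → x * y ∈ P → x ∈ P ∨ y ∈ P)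
    -- `J` is a proper order-convex radical ideal of `B`
    (J : Set B) (hJ0 : (0 : B) ∈ J)
    (hJsub : ∀ x y : B, x ∈ J → y ∈ J → x - y ∈ J)
    (hJabsorb : ∀ b y : B, y ∈ J → b * y ∈ J)
    (hJconvex : ∀ u v w : B, u ∈ J → w ∈ J → u ≤ v → v ≤ w → v ∈ J)
    (hJproper : J ≠ Set.univ)
    (hJradical : ∀ (y : B) (n : ℕ), pw y n ∈ J → y ∈ J)
    (hPJ : P ⊆ J)
    -- the set `Q`
    (Q : Set B)
    (hQ : Q = {y : B | y ∈ J ∧ ∃ n : ℕ, ∃ x ∈ P, pw |y| n ≤ x}) :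
    -- `Q` is an ℓ-ideal of `B` …
    ((0 : B) ∈ Q) ∧ (∀ x y : B, x ∈ Q → y ∈ Q → x - y ∈ Q) ∧
    (∀ b y : B, y ∈ Q → b * y ∈ Q) ∧
    (∀ u v w : B, u ∈ Q → w ∈ Q → u ≤ v → v ≤ w → v ∈ Q) ∧
    -- … which is proper and prime …
    (Q ≠ Set.univ) ∧ (∀ x y : B, x * y ∈ Q → x ∈ Q ∨ y ∈ Q) ∧
    -- … and satisfies `Q ⊆ J` and `Q ∩ A = P`.
    (Q ⊆ J) ∧ (Q ∩ A = P) := by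
  subst hQ
  -- basic facts about abs
  have habs_cases : ∀ y : B, |y| = y ∨ |y| = -y := by
    intro y
    rcases le_total 0 y with h | h
    · exact Or.inl (abs_of_nonneg h)
    · exact Or.inr (abs_of_nonpos h)
  have habs_nonneg : ∀ y : B, 0 ≤ |y| := by
    intro y
    rcases le_total 0 y with h | h
    · exact le_trans h (le_abs_self y)
    · exact le_trans (neg_nonneg.2 h) (neg_le_abs y)
  -- negation closure
  have hJneg : ∀ y : B, y ∈ J → -y ∈ J := by
    intro y hy
    have := hJsub 0 y hJ0 hy
    rwa [zero_sub] at this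
  have hJabs : ∀ y : B, y ∈ J → |y| ∈ J := by
    intro y hy
    rcases habs_cases y with e | e <;> rw [e]
    · exact hy
    · exact hJneg y hy
  have hPneg : ∀ y : B, y ∈ P → -y ∈ P := by
    intro y hy
    have := hPsub 0 y hP0 hy
    rwa [zero_sub] at this
  have hPadd : ∀ u v : B, u ∈ P → v ∈ P → u + v ∈ P := by
    intro u v hu hv
    have := hPsub u (-v) hu (hPneg v hv)
    rwa [sub_neg_eq_add] at this
  -- a positive element outside `J` bounding `J`
  obtain ⟨z0, hz0⟩ : ∃ z : B, z ∉ J := by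
    rcases Set.ne_univ_iff_exists_notMem J |>.1 hJproper with ⟨z, hz⟩
    exact ⟨z, hz⟩
  have hz0ne : z0 ≠ 0 := fun h => hz0 (h ▸ hJ0)
  obtain ⟨z, hzJ, hzpos⟩ : ∃ z : B, z ∉ J ∧ 0 < z := by
    refine ⟨|z0|, ?_, ?_⟩
    · rcases habs_cases z0 with e | e <;> rw [e]
      · exact hz0
      · intro h
        exact hz0 (by have := hJneg _ h; rwa [neg_neg] at this)
    · rcases lt_or_eq_of_le (habs_nonneg z0) with h | h
      · exact h
      · exfalso
        rcases habs_cases z0 with e | e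
        · exact hz0ne (by rw [← e, ← h])
        · exact hz0ne (by have : -z0 = 0 := by rw [← e, ← h]
                          have := congrArg Neg.neg this
                          rwa [neg_neg, neg_zero] at this)
  have hJlt : ∀ j ∈ J, j < z := by
    intro j hj
    by_contra hle
    push_neg at hle
    exact hzJ (hJconvex 0 z j hJ0 hj hzpos.le hle)
  -- KEY LEMMA: elements of J act as multipliers ≤ 1 on nonnegative elements
  have lemA : ∀ w ∈ J, ∀ x : B, 0 ≤ x → w * x ≤ x := by
    intro w hw x hx
    by_contra hlt
    push_neg at hlt
    have h1 : z * w ∈ J := hJabsorb z w hw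
    have h2 : z * w < z := hJlt _ h1
    have h3 : (z * w) * x ≤ z * x := by
      have := hmul (z - z * w) x (sub_nonneg.2 h2.le) hx
      rw [sub_mul] at this
      exact sub_nonneg.1 this
    have h4 : z * x < z * (w * x) := by
      have hne : z * (w * x - x) ≠ 0 := by
        intro h
        rcases hdom _ _ h with h' | h'
        · exact hzpos.ne' h'
        · exact (sub_pos.2 hlt).ne' h'
      have hge : 0 ≤ z * (w * x - x) := hmul _ _ hzpos.le (sub_pos.2 hlt).le
      have hpos : 0 < z * (w * x - x) := lt_of_le_of_ne hge (Ne.symm hne)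
      rw [mul_sub] at hpos
      exact sub_pos.1 hpos
    rw [mul_assoc] at h3
    exact absurd h3 (not_le.2 h4)
  -- abs is multiplicative
  have habs_mul : ∀ u v : B, |u * v| = |u| * |v| := by
    intro u v
    rcases le_total 0 u with hu | hu <;> rcases le_total 0 v with hv | hv
    · rw [abs_of_nonneg hu, abs_of_nonneg hv, abs_of_nonneg (hmul _ _ hu hv)]
    · rw [abs_of_nonneg hu, abs_of_nonpos hv, abs_of_nonpos, mul_neg]
      have := hmul u (-v) hu (neg_nonneg.2 hv)
      rw [mul_neg] at this
      exact neg_nonneg.1 (by rwa [← neg_zero, ← neg_neg (u*v)] at this ⊢ <;> exact this)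
    · rw [abs_of_nonpos hu, abs_of_nonneg hv, abs_of_nonpos, neg_mul]
      have := hmul (-u) v (neg_nonneg.2 hu) hv
      rw [neg_mul] at this
      exact neg_nonneg.1 this
    · rw [abs_of_nonpos hu, abs_of_nonpos hv, abs_of_nonneg, neg_mul_neg]
      have := hmul (-u) (-v) (neg_nonneg.2 hu) (neg_nonneg.2 hv)
      rwa [neg_mul_neg] at this
  -- membership in P is closed under ℕ-smul
  have hPnsmul : ∀ (N : ℕ) (x : B), x ∈ P → N • x ∈ P := by
    intro N x hx
    induction N with
    | zero => simpa using hP0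
    | succ N ih => rw [succ_nsmul]; exact hPadd _ _ ih hx
  -- main bounding lemma for sums
  have main : ∀ u b : B, 0 ≤ b → ∀ (m : ℕ) (x : B), x ∈ P → pw b m ≤ x →
      |u| ≤ b + b → ∃ n : ℕ, ∃ x' ∈ P, pw |u| n ≤ x' := by
    intro u b hb0 m x hxP hbx habs
    have hdouble : ∀ k, ∃ N : ℕ, pw (b + b) k = N • pw b k := by
      intro k
      induction k with
      | zero => exact ⟨2, (two_nsmul b).symm⟩
      | succ k ih =>
        obtain ⟨N, hN⟩ := ih
        refine ⟨N + N, ?_⟩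
        show pw (b + b) k * (b + b) = (N + N) • (pw b k * b)
        rw [hN, smul_mul_assoc, mul_add, nsmul_add, add_nsmul]
    obtain ⟨N, hN⟩ := hdouble m
    refine ⟨m, N • x, hPnsmul N x hxP, ?_⟩
    calc pw |u| m ≤ pw (b + b) m := pw_mono hmul (habs_nonneg u) habs m
      _ = N • pw b m := hN
      _ ≤ N • x := nsmul_le_nsmul_right hbx N
  -- |a - b| ≤ |a| + |b|
  have habs_sub : ∀ a b : B, |a - b| ≤ |a| + |b| := by
    intro a b
    rcases habs_cases (a - b) with e | e <;> rw [e]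
    · calc a - b ≤ |a| - b := sub_le_sub_right (le_abs_self a) b
        _ = |a| + -b := sub_eq_add_neg _ _
        _ ≤ |a| + |b| := add_le_add_right (neg_le_abs b) _
    · rw [neg_sub]
      calc b - a ≤ |b| - a := sub_le_sub_right (le_abs_self b) a
        _ = |b| + -a := sub_eq_add_neg _ _
        _ ≤ |b| + |a| := add_le_add_right (neg_le_abs a) _
        _ = |a| + |b| := add_comm _ _
  -- prime "core": if u*v ∈ Q and |u| ≤ |v| then u ∈ Q
  have hcore : ∀ u v : B, u * v ∈ J →
      (∃ n : ℕ, ∃ x ∈ P, pw |u * v| n ≤ x) → |u| ≤ |v| →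
      u ∈ J ∧ ∃ n : ℕ, ∃ x ∈ P, pw |u| n ≤ x := by
    intro u v huvJ ⟨n, x, hxP, hx⟩ huv
    have h0u : 0 ≤ |u| := habs_nonneg u
    have huusq : u * u = |u| * |u| := by
      rcases habs_cases u with e | e <;> rw [e]
      · rw [neg_mul_neg]
    have huuJ : u * u ∈ J := by
      refine hJconvex 0 (u * u) |u * v| hJ0 (hJabs _ huvJ) ?_ ?_
      · rw [huusq]; exact hmul _ _ h0u h0u
      · rw [huusq, habs_mul]
        exact aux_mul_le_left hmul huv h0u
    have huJ : u ∈ J := hJradical u 1 huuJ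
    refine ⟨huJ, n + n + 1, x, hxP, ?_⟩
    calc pw |u| (n + n + 1) = pw |u| n * pw |u| n := (pw_add _ _ _).symm
      _ ≤ pw |u| n * pw |v| n := aux_mul_le_left hmul
            (pw_mono hmul h0u huv n) (pw_nonneg hmul h0u n)
      _ = pw (|u| * |v|) n := (pw_mul _ _ _).symm
      _ = pw |u * v| n := by rw [habs_mul]
      _ ≤ x := hx
  refine ⟨?_, ?_, ?_, ?_, ?_, ?_, ?_, ?_⟩
  -- 0 ∈ Q
  · refine ⟨hJ0, 0, 0, hP0, ?_⟩
    show |(0 : B)| ≤ 0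
    rw [abs_of_nonneg (le_refl (0 : B))]
  -- closed under subtraction
  · rintro y1 y2 ⟨h1J, n, x1, hx1P, hx1⟩ ⟨h2J, m, x2, hx2P, hx2⟩
    refine ⟨hJsub _ _ h1J h2J, ?_⟩
    rcases le_total |y1| |y2| with h | h
    · refine main (y1 - y2) |y2| (habs_nonneg y2) m x2 hx2P hx2 ?_
      calc |y1 - y2| ≤ |y1| + |y2| := habs_sub y1 y2
        _ ≤ |y2| + |y2| := add_le_add_left h _
    · refine main (y1 - y2) |y1| (habs_nonneg y1) n x1 hx1P hx1 ?_
      calc |y1 - y2| ≤ |y1| + |y2| := habs_sub y1 y2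
        _ ≤ |y1| + |y1| := add_le_add_right h _
  -- absorption
  · rintro b y ⟨hyJ, n, x, hxP, hyx⟩
    refine ⟨hJabsorb b y hyJ, n + n + 1, x, hxP, ?_⟩
    have h0y : 0 ≤ |y| := habs_nonneg y
    have h0b : 0 ≤ |b| := habs_nonneg b
    have hx0 : 0 ≤ x := le_trans (pw_nonneg hmul h0y n) hyx
    have hpb : 0 ≤ pw |b| (n + n + 1) := pw_nonneg hmul h0b _
    calc pw |b * y| (n + n + 1) = pw (|b| * |y|) (n + n + 1) := by rw [habs_mul]
      _ = pw |b| (n + n + 1) * pw |y| (n + n + 1) := pw_mul _ _ _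
      _ = pw |b| (n + n + 1) * (pw |y| n * pw |y| n) := by rw [pw_add]
      _ ≤ pw |b| (n + n + 1) * (x * x) := aux_mul_le_left hmul
            (aux_mul_mul hmul (pw_nonneg hmul h0y n) hyx (pw_nonneg hmul h0y n) hyx) hpb
      _ = (pw |b| (n + n + 1) * x) * x := (mul_assoc _ _ _).symm
      _ ≤ x := lemA _ (hJabsorb _ x (hPJ hxP)) x hx0
  -- convexity
  · rintro u v w ⟨huJ, nu, xu, hxuP, hxu⟩ ⟨hwJ, nw, xw, hxwP, hxw⟩ huv hvw
    refine ⟨hJconvex u v w huJ hwJ huv hvw, ?_⟩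
    have : |v| ≤ |u| ∨ |v| ≤ |w| := by
      rcases habs_cases v with e | e
      · right; rw [e]; exact le_trans hvw (le_abs_self w)
      · left; rw [e]; exact le_trans (neg_le_neg_iff.2 huv) (neg_le_abs u)
    rcases this with h | h
    · exact ⟨nu, xu, hxuP, le_trans (pw_mono hmul (habs_nonneg v) h nu) hxu⟩
    · exact ⟨nw, xw, hxwP, le_trans (pw_mono hmul (habs_nonneg v) h nw) hxw⟩
  -- properness
  · intro h
    apply hzJ
    have : z ∈ {y : B | y ∈ J ∧ ∃ n : ℕ, ∃ x ∈ P, pw |y| n ≤ x} := by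
      rw [h]; exact Set.mem_univ z
    exact this.1
  -- primality
  · rintro u v ⟨huvJ, n, x, hxP, hx⟩
    rcases le_total |u| |v| with h | h
    · exact Or.inl (hcore u v huvJ ⟨n, x, hxP, hx⟩ h)
    · refine Or.inr (hcore v u ?_ ⟨n, x, hxP, ?_⟩ h)
      · rwa [mul_comm]
      · rwa [mul_comm]
  -- Q ⊆ J
  · intro y hy
    exact hy.1
  -- Q ∩ A = P
  · ext y
    constructor
    · rintro ⟨⟨hyJ, n, x, hxP, hx⟩, hyA⟩
      have hyabsA : |y| ∈ A := by
        rcases habs_cases y with e | e <;> rw [e]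
        · exact hyA
        · have := hAsub 0 y hA0 hyA
          rwa [zero_sub] at this
      have hpwA : ∀ k, pw |y| k ∈ A := by
        intro k
        induction k with
        | zero => exact hyabsA
        | succ k ih => exact hAmul _ _ ih hyabsA
      have hpwP : pw |y| n ∈ P :=
        hPconvex 0 (pw |y| n) x hP0 hxP (hpwA n)
          (pw_nonneg hmul (habs_nonneg y) n) hx
      have habsP : |y| ∈ P := by
        have step : ∀ k, pw |y| k ∈ P → |y| ∈ P := by
          intro k
          induction k with
          | zero => exact id
          | succ k ih =>
            intro hk
            rcases hPprime (pw |y| k) |y| (hpwA k) hyabsA hk with h | h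
            · exact ih h
            · exact h
        exact step n hpwP
      rcases habs_cases y with e | e
      · rwa [e] at habsP
      · rw [e] at habsP
        have := hPsub 0 (-y) hP0 habsP
        rwa [zero_sub, neg_neg] at this
    · intro hyP
      refine ⟨⟨hPJ hyP, 0, |y|, ?_, le_refl _⟩, hPA hyP⟩
      rcases habs_cases y with e | e <;> rw [e]
      · exact hyP
      · exact hPneg y hyP
end

section
/- In the lexicographic product G = H ×ₗₑₓ F of a nontrivial totally ordered abelian group H with an abelian lattice-ordered group F, any pairwise orthogonal subset of strictly positive elements with more than one element is contained in {0} × F. Consequently, if F is countable, every pairwise orthogonal subset of G⁺⁺ is countable. -/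
/-- In the lexicographic product `G = H ×ₗₑₓ F` of a nontrivial totally ordered
abelian group `H` with an abelian ℓ-group `F`, any pairwise orthogonal set of
strictly positive elements with more than one element is contained in
`{0} × F`; consequently, if `F` is countable then every pairwise orthogonal
subset of `G⁺⁺` is countable.  Here `lexLe` is the lexicographic order on
`H × F`, an element is strictly positive when `lexLe 0 u` and `u ≠ 0`, and
`u, v` are orthogonal when every common lower bound is `≤ 0` (i.e.
`u ⊓ v = 0` for nonnegative `u, v`). -/
theorem stmt_17 {H F : Type*} [LinearOrder H] [AddCommGroup H]
    [CovariantClass H H (· + ·) (· ≤ ·)]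
    [Lattice F] [AddCommGroup F] [CovariantClass F F (· + ·) (· ≤ ·)]
    (hH : ∃ h : H, h ≠ 0)
    (lexLe : H × F → H × F → Prop)
    (hlexLe : ∀ u v : H × F, lexLe u v ↔ u.1 < v.1 ∨ (u.1 = v.1 ∧ u.2 ≤ v.2))
    (S : Set (H × F))
    (hSpos : ∀ u ∈ S, lexLe 0 u ∧ u ≠ 0)
    (hSorth : ∀ u ∈ S, ∀ v ∈ S, u ≠ v →
      ∀ w : H × F, lexLe w u → lexLe w v → lexLe w 0) :
    ((∃ u ∈ S, ∃ v ∈ S, u ≠ v) → ∀ u ∈ S, u.1 = 0) ∧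
    (Countable F → S.Countable) := by
  -- key: any element of S has nonnegative first coordinate
  have hnn : ∀ u ∈ S, 0 ≤ u.1 := by
    intro u hu
    rcases (hlexLe 0 u).mp (hSpos u hu).1 with h | h
    · exact le_of_lt h
    · exact le_of_eq h.1
  have key : (∃ u ∈ S, ∃ v ∈ S, u ≠ v) → ∀ u ∈ S, u.1 = 0 := by
    rintro ⟨a, ha, b, hb, hab⟩ u hu
    by_contra h0
    have hu1 : 0 < u.1 := lt_of_le_of_ne (hnn u hu) (Ne.symm h0)
    -- pick v ∈ S, v ≠ u
    obtain ⟨v, hv, hvu⟩ : ∃ v ∈ S, v ≠ u := by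
      by_cases hau : a = u
      · exact ⟨b, hb, fun h => hab (by rw [hau, h])⟩
      · exact ⟨a, ha, hau⟩
    rcases lt_or_eq_of_le (hnn v hv) with hv1 | hv1
    · -- v.1 > 0: take w = (min u.1 v.1, u.2 ⊓ v.2)
      set w : H × F := (min u.1 v.1, u.2 ⊓ v.2) with hw
      have hwu : lexLe w u := by
        rw [hlexLe]
        rcases lt_or_eq_of_le (min_le_left u.1 v.1) with h | h
        · exact Or.inl h
        · exact Or.inr ⟨h, inf_le_left⟩
      have hwv : lexLe w v := by
        rw [hlexLe]
        rcases lt_or_eq_of_le (min_le_right u.1 v.1) with h | h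
        · exact Or.inl h
        · exact Or.inr ⟨h, inf_le_right⟩
      have := (hlexLe w 0).mp (hSorth u hu v hv (Ne.symm hvu) w hwu hwv)
      have hwpos : (0 : H) < w.1 := lt_min hu1 hv1
      rcases this with h | h
      · exact absurd (hwpos.trans h) (lt_irrefl _)
      · exact absurd h.1 (ne_of_gt hwpos)
    · -- v.1 = 0: take w = (0, v.2)
      set w : H × F := (0, v.2) with hw
      have hwu : lexLe w u := (hlexLe w u).mpr (Or.inl hu1)
      have hwv : lexLe w v := (hlexLe w v).mpr (Or.inr ⟨hv1, le_refl _⟩)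
      have := (hlexLe w 0).mp (hSorth u hu v hv (Ne.symm hvu) w hwu hwv)
      have hv2 : 0 ≤ v.2 := by
        rcases (hlexLe 0 v).mp (hSpos v hv).1 with h | h
        · exact absurd h (by rw [← hv1]; exact lt_irrefl _)
        · exact h.2
      rcases this with h | h
      · exact absurd h (lt_irrefl _)
      · have : v.2 = 0 := le_antisymm h.2 hv2
        exact (hSpos v hv).2 (Prod.ext hv1.symm this)
  refine ⟨key, fun hF => ?_⟩
  by_cases hex : ∃ u ∈ S, ∃ v ∈ S, u ≠ v
  · have h0 := key hex
    have hinj : Function.Injective (fun u : S => (u : H × F).2) := by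
      rintro ⟨u, hu⟩ ⟨v, hv⟩ h
      simp only [Subtype.mk_eq_mk]
      exact Prod.ext ((h0 u hu).trans (h0 v hv).symm) h
    have : Countable S := hinj.countable
    exact Set.countable_coe_iff.mp this
  · push_neg at hex
    exact Set.Subsingleton.countable (fun u hu v hv => hex u hu v hv)
end
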